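/- arXiv:1311.2230 — 3 statements merged into one kernel-verified Lean document; each statement's English description precedes it below -/
import Mathlib

section
/- Let A = (a_0, …, a_m) be real numbers with associated characteristic polynomial P_A(x) = Σ_{i=0}^m a_i x^{m−i}. If w ≠ 0 satisfies P_A(w) = 0 and P_A(w⁻¹) = 0, then the A-Chebyshev polynomial T_{n,A}(x) = Σ_{i=0}^m a_i T_{n−i}(x) vanishes at x = (w + w⁻¹)/2 for every n ≥ m. -/
/-!
Writing `x = (w + w⁻¹) / 2`, one has `T_k(x) = (w ^ k + w⁻¹ ^ k) / 2` (Chebyshev polynomials are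
rescaled Dickson polynomials). Hence for `n ≥ m` the sum `∑ aᵢ T_{n-i}(x)` equals
`(w ^ (n - m) P_A(w) + w⁻¹ ^ (n - m) P_A(w⁻¹)) / 2`, which vanishes when `w` and `w⁻¹` are roots.
-/

open Polynomial Polynomial.Chebyshev Finset

theorem Polynomial.Chebyshev.T_eval_half_add_inv {K : Type*} [Field K] [NeZero (2 : K)]
    {x : K} (hx : x ≠ 0) (n : ℕ) :
    (T K n).eval ((x + x⁻¹) / 2) = (x ^ n + x⁻¹ ^ n) / 2 := by
  let : Invertible (2 : K) := invertibleOfNonzero two_ne_zero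
  rw [chebyshev_T_eq_dickson_one_one, eval_mul, eval_comp, eval_mul, eval_X, eval_ofNat,
    mul_div_cancel₀ _ two_ne_zero, dickson_one_one_eval_add_inv _ _ (mul_inv_cancel₀ hx),
    eval_C, invOf_eq_inv, inv_mul_eq_div]

theorem sum_mul_T_eval_half_add_inv {K : Type*} [Field K] [NeZero (2 : K)] (m : ℕ)
    (a : ℕ → K) {w : K} (hw : w ≠ 0) {n : ℕ} (hn : m ≤ n) :
    ∑ i ∈ range (m + 1), a i * (T K (n - i)).eval ((w + w⁻¹) / 2) =
      (w ^ (n - m) * ∑ i ∈ range (m + 1), a i * w ^ (m - i) +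
        w⁻¹ ^ (n - m) * ∑ i ∈ range (m + 1), a i * w⁻¹ ^ (m - i)) / 2 := by
  rw [mul_sum, mul_sum, ← sum_add_distrib, sum_div]
  refine sum_congr rfl fun i hi => ?_
  have him : i ≤ m := Nat.lt_succ_iff.mp (mem_range.mp hi)
  have hni : n - i = (n - m) + (m - i) := by omega
  rw [← Nat.cast_sub (him.trans hn), T_eval_half_add_inv hw, hni, pow_add, pow_add]
  ring

theorem aChebyshev_root_of_reciprocal_roots (m : ℕ) (a : ℕ → ℝ) (w : ℝ) (hw : w ≠ 0)
    (h1 : ∑ i ∈ range (m + 1), a i * w ^ (m - i) = 0)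
    (h2 : ∑ i ∈ range (m + 1), a i * w⁻¹ ^ (m - i) = 0)
    (n : ℕ) (hn : m ≤ n) :
    ∑ i ∈ range (m + 1), a i * (Chebyshev.T ℝ (n - i)).eval ((w + w⁻¹) / 2) = 0 := by
  rw [sum_mul_T_eval_half_add_inv m a hw hn, h1, h2]
  simp
end

section
/- Let A = (a_0, …, a_m) be real numbers and T_{n,A}(x) = Σ_{i=0}^m a_i T_{n−i}(x). Then for every x ∈ [−1, 1] and n ≥ m, T_{n,A}(x)² ≤ Σ_{i=0}^m Σ_{k=0}^m a_i a_k T_{|i−k|}(x). In particular the right-hand side, the squared envelope E_A(x)², is nonnegative on [−1, 1] and independent of n. -/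
/-!
Put `x = cos θ`, so that `T_j(x) = cos (j θ)`. With `C = ∑ aᵢ cos (i θ)` and `S = ∑ aᵢ sin (i θ)`,
the addition formula gives `T_{n,A}(x) = cos (n θ) C + sin (n θ) S` and the double sum equals
`C² + S²`; the inequality is then Cauchy–Schwarz for the unit vector `(cos (n θ), sin (n θ))`.
-/

open Polynomial Polynomial.Chebyshev Finset

namespace Real

variable {ι : Type*} (s : Finset ι) (a t : ι → ℝ)

theorem sum_mul_cos_sub_eq (φ : ℝ) :
    ∑ i ∈ s, a i * cos (φ - t i) =
      cos φ * ∑ i ∈ s, a i * cos (t i) + sin φ * ∑ i ∈ s, a i * sin (t i) := by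
  simp only [mul_sum, ← sum_add_distrib, cos_sub]
  exact sum_congr rfl fun i _ ↦ by ring

theorem sum_sum_mul_cos_sub_eq :
    ∑ i ∈ s, ∑ k ∈ s, a i * a k * cos (t i - t k) =
      (∑ i ∈ s, a i * cos (t i)) ^ 2 + (∑ i ∈ s, a i * sin (t i)) ^ 2 := by
  simp only [sq, sum_mul_sum, ← sum_add_distrib, cos_sub]
  exact sum_congr rfl fun i _ ↦ sum_congr rfl fun k _ ↦ by ring

theorem cos_mul_add_sin_mul_sq_le (φ c d : ℝ) : (cos φ * c + sin φ * d) ^ 2 ≤ c ^ 2 + d ^ 2 := by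
  nlinarith [sq_nonneg (sin φ * c - cos φ * d), sin_sq_add_cos_sq φ]

theorem sum_mul_cos_sub_sq_le (φ : ℝ) :
    (∑ i ∈ s, a i * cos (φ - t i)) ^ 2 ≤ ∑ i ∈ s, ∑ k ∈ s, a i * a k * cos (t i - t k) := by
  rw [sum_mul_cos_sub_eq, sum_sum_mul_cos_sub_eq]
  exact cos_mul_add_sin_mul_sq_le φ _ _

end Real

theorem Polynomial.Chebyshev.T_real_eval_eq_cos_mul_arccos {x : ℝ} (hx : x ∈ Set.Icc (-1 : ℝ) 1)
    (j : ℤ) : (T ℝ j).eval x = Real.cos (j * Real.arccos x) := by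
  rw [← T_real_cos, Real.cos_arccos hx.1 hx.2]

theorem aChebyshev_sq_le_envelope_sq_general (m : ℕ) (a : ℕ → ℝ) (x : ℝ)
    (hx : x ∈ Set.Icc (-1 : ℝ) 1) (n : ℕ) :
    (∑ i ∈ range (m + 1), a i * (Chebyshev.T ℝ (n - i)).eval x) ^ 2 ≤
      ∑ i ∈ range (m + 1), ∑ k ∈ range (m + 1),
        a i * a k * (Chebyshev.T ℝ |(i : ℤ) - (k : ℤ)|).eval x := by
  simp only [← Int.natCast_natAbs, T_natAbs, T_real_eval_eq_cos_mul_arccos hx, Int.cast_sub,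
    Int.cast_natCast, sub_mul]
  exact Real.sum_mul_cos_sub_sq_le _ a (fun i ↦ i * Real.arccos x) _

theorem aChebyshev_sq_le_envelope_sq (m : ℕ) (a : ℕ → ℝ) (x : ℝ)
    (hx : x ∈ Set.Icc (-1 : ℝ) 1) (n : ℕ) (hn : m ≤ n) :
    (∑ i ∈ range (m + 1), a i * (Chebyshev.T ℝ (n - i)).eval x) ^ 2 ≤
      ∑ i ∈ range (m + 1), ∑ k ∈ range (m + 1),
        a i * a k * (Chebyshev.T ℝ |(i : ℤ) - (k : ℤ)|).eval x :=
  aChebyshev_sq_le_envelope_sq_general m a x hx n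
end

section
/- Let A = (a_0, …, a_m) be real numbers with characteristic polynomial P_A(x) = Σ_{i=0}^m a_i x^{m−i} such that P_A has a real root ω with |ω| > 1 and P_A(ω⁻¹) ≠ 0. Then for every ε > 0 there exists n_0 such that for all n ≥ n_0, the A-Chebyshev polynomial T_{n,A}(x) = Σ_{i=0}^m a_i T_{n−i}(x) has a complex root ξ with |ξ − (ω + ω⁻¹)/2| < ε. -/
/-!
Substituting `x = (z + z⁻¹) / 2`, the Chebyshev identity `2 T_k(x) = z ^ k + z⁻¹ ^ k` gives
`2 T_{n,A}(x) = z ^ (n - m) P_A(z) + z⁻¹ ^ (n - m) P_A(z⁻¹)`, so `x` is a root of `T_{n,A}` as soon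
as `z` is a root of `P_A(z) + z⁻¹ ^ (2 (n - m)) P_A(z⁻¹)`. On a small disc around `ω`, where
`|z| > 1`, the second summand tends uniformly to `0`, and a Rouché-type argument (the minimum
modulus principle) moves the root `ω` of `P_A` to a nearby root `z` of the perturbed function.
Finally `z ↦ (z + z⁻¹) / 2` is `1`-Lipschitz on `|z| ≥ 1`.
-/

open Polynomial Polynomial.Chebyshev Finset Filter Metric Topology

noncomputable def charPoly {R : Type*} [Semiring R] (m : ℕ) (a : ℕ → R) : R[X] :=
  ∑ i ∈ range (m + 1), C (a i) * X ^ (m - i)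

@[simp]
theorem eval_charPoly {R : Type*} [CommSemiring R] (m : ℕ) (a : ℕ → R) (x : R) :
    (charPoly m a).eval x = ∑ i ∈ range (m + 1), a i * x ^ (m - i) := by
  simp [charPoly, eval_finsetSum]

theorem Polynomial.Chebyshev.two_mul_T_eval_of_two_mul_eq {R : Type*} [CommRing R] {x z y : R}
    (hzy : z * y = 1) (hx : 2 * x = z + y) (n : ℕ) :
    2 * (T R n).eval x = z ^ n + y ^ n := by
  calc 2 * (T R n).eval x = ((Chebyshev.C R n).comp (2 * X)).eval x := by
        rw [C_comp_two_mul_X]; simp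
    _ = (dickson 1 (1 : R) n).eval (z + y) := by
        rw [dickson_one_one_eq_chebyshev_C]; simp [eval_comp, hx]
    _ = z ^ n + y ^ n := dickson_one_one_eval_add_inv z y hzy n

theorem two_mul_sum_T_eval_eq {R : Type*} [CommRing R] {x z y : R}
    (hzy : z * y = 1) (hx : 2 * x = z + y) (a : ℕ → R) {m n : ℕ} (hmn : m ≤ n) :
    2 * ∑ i ∈ range (m + 1), a i * (T R ((n : ℤ) - i)).eval x
      = z ^ (n - m) * (charPoly m a).eval z + y ^ (n - m) * (charPoly m a).eval y := by
  simp only [eval_charPoly, mul_sum, ← sum_add_distrib]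
  refine sum_congr rfl fun i hi => ?_
  have him : i ≤ m := Nat.lt_succ_iff.mp (mem_range.mp hi)
  have hT : 2 * (T R ((n : ℤ) - i)).eval x = z ^ (n - i) + y ^ (n - i) := by
    rw [← Nat.cast_sub (him.trans hmn)]
    exact two_mul_T_eval_of_two_mul_eq hzy hx _
  have hsplit : ∀ u : R, u ^ (n - i) = u ^ (n - m) * u ^ (m - i) := fun u => by
    rw [← pow_add]; congr 1; omega
  linear_combination a i * hT + a i * (hsplit z + hsplit y)

theorem norm_half_add_inv_sub_le {𝕜 : Type*} [RCLike 𝕜] {z w : 𝕜}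
    (hz : 1 ≤ ‖z‖) (hw : 1 ≤ ‖w‖) :
    ‖(z + z⁻¹) / 2 - (w + w⁻¹) / 2‖ ≤ ‖z - w‖ := by
  have hz0 : z ≠ 0 := norm_pos_iff.mp (by linarith)
  have hw0 : w ≠ 0 := norm_pos_iff.mp (by linarith)
  have hinv : ‖(z * w)⁻¹‖ ≤ 1 := by
    rw [norm_inv, norm_mul]; exact inv_le_one_of_one_le₀ (one_le_mul_of_one_le_of_one_le hz hw)
  have hfactor : (z + z⁻¹) / 2 - (w + w⁻¹) / 2 = (z - w) * ((1 - (z * w)⁻¹) / 2) := by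
    field_simp; ring
  rw [hfactor, norm_mul]
  refine mul_le_of_le_one_right (norm_nonneg _) ?_
  rw [norm_div, RCLike.norm_ofNat, div_le_one two_pos]
  calc ‖1 - (z * w)⁻¹‖ ≤ ‖(1 : 𝕜)‖ + ‖(z * w)⁻¹‖ := norm_sub_le _ _
    _ ≤ 2 := by rw [norm_one]; linarith

-- Minimum modulus principle: otherwise the maximum modulus principle applies to `F⁻¹`.
theorem Complex.exists_mem_ball_eq_zero_of_norm_lt_on_sphere {F : ℂ → ℂ} {w : ℂ} {r : ℝ}
    (hr : 0 < r) (hF : DifferentiableOn ℂ F (closedBall w r))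
    (h : ∀ z ∈ sphere w r, ‖F w‖ < ‖F z‖) : ∃ z ∈ ball w r, F z = 0 := by
  by_contra! hball
  have hne : ∀ z ∈ closedBall w r, F z ≠ 0 := by
    intro z hz
    rcases eq_or_lt_of_le (mem_closedBall.mp hz) with hzr | hzr
    · exact norm_pos_iff.mp ((norm_nonneg _).trans_lt (h z hzr))
    · exact hball z hzr
  have hinv : DiffContOnCl ℂ (fun z => (F z)⁻¹) (ball w r) :=
    (hF.inv hne).diffContOnCl_ball subset_rfl
  obtain ⟨z, hz, hmax⟩ := Complex.exists_mem_frontier_isMaxOn_norm isBounded_ball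
    (nonempty_ball.mpr hr) hinv
  rw [frontier_ball w hr.ne'] at hz
  have hle : ‖(F w)⁻¹‖ ≤ ‖(F z)⁻¹‖ := hmax (subset_closure (mem_ball_self hr))
  rw [norm_inv, norm_inv] at hle
  have hFw : 0 < ‖F w‖ := norm_pos_iff.mpr (hne w (mem_closedBall_self hr.le))
  have hFz : 0 < ‖F z‖ := norm_pos_iff.mpr (hne z (sphere_subset_closedBall hz))
  exact (h z hz).not_ge ((inv_le_inv₀ hFw hFz).mp hle)

theorem Complex.eventually_exists_mem_ball_add_eq_zero_of_tendstoUniformlyOn {ι : Type*}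
    {l : Filter ι} {f : ℂ → ℂ} {g : ι → ℂ → ℂ} {w : ℂ} {r : ℝ} (hr : 0 < r)
    (hf : ContinuousOn f (sphere w r)) (hfw : f w = 0) (hfr : ∀ z ∈ sphere w r, f z ≠ 0)
    (hg : TendstoUniformlyOn g 0 l (closedBall w r))
    (hfg : ∀ᶠ i in l, DifferentiableOn ℂ (fun z => f z + g i z) (closedBall w r)) :
    ∀ᶠ i in l, ∃ z ∈ ball w r, f z + g i z = 0 := by
  obtain ⟨z₀, hz₀, hmin⟩ := (isCompact_sphere w r).exists_isMinOn
    (NormedSpace.sphere_nonempty.mpr hr.le) hf.norm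
  have hc : 0 < ‖f z₀‖ := norm_pos_iff.mpr (hfr z₀ hz₀)
  filter_upwards [Metric.tendstoUniformlyOn_iff.mp hg _ (half_pos hc), hfg] with i hsmall hdiff
  refine Complex.exists_mem_ball_eq_zero_of_norm_lt_on_sphere hr hdiff fun z hz => ?_
  have hgw := hsmall w (mem_closedBall_self hr.le)
  have hgz := hsmall z (sphere_subset_closedBall hz)
  simp only [Pi.zero_apply, dist_zero_left] at hgw hgz
  calc ‖f w + g i w‖ = ‖g i w‖ := by rw [hfw, zero_add]
    _ < ‖f z₀‖ - ‖g i z‖ := by linarith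
    _ ≤ ‖f z‖ - ‖g i z‖ := by gcongr; exact hmin hz
    _ ≤ ‖f z + g i z‖ := by
        linarith [add_sub_cancel_right (f z) (g i z) ▸ norm_sub_le (f z + g i z) (g i z)]

theorem tendstoUniformlyOn_pow_mul_zero {α 𝕜 : Type*} [NormedField 𝕜] {s : Set α}
    {u h : α → 𝕜} {q M : ℝ} (hq₀ : 0 ≤ q) (hq : q < 1) (hu : ∀ x ∈ s, ‖u x‖ ≤ q)
    (hh : ∀ x ∈ s, ‖h x‖ ≤ M) :
    TendstoUniformlyOn (fun k x => u x ^ k * h x) 0 atTop s := by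
  rw [Metric.tendstoUniformlyOn_iff]
  intro ε hε
  have hlim : Tendsto (fun k : ℕ => q ^ k * M) atTop (𝓝 0) := by
    simpa using (tendsto_pow_atTop_nhds_zero_of_lt_one hq₀ hq).mul_const M
  filter_upwards [hlim.eventually (gt_mem_nhds hε)] with k hk x hx
  rw [Pi.zero_apply, dist_zero_left, norm_mul, norm_pow]
  calc ‖u x‖ ^ k * ‖h x‖ ≤ q ^ k * M :=
        mul_le_mul (pow_le_pow_left₀ (norm_nonneg _) (hu x hx) k) (hh x hx) (norm_nonneg _)
          (by positivity)
    _ < ε := hk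

theorem Polynomial.eventually_nhdsNE_eval_ne_zero {R : Type*} [CommRing R] [IsDomain R]
    [TopologicalSpace R] [T1Space R] {P : R[X]} (hP : P ≠ 0) (w : R) : ∀ᶠ z in 𝓝[≠] w, P.eval z ≠ 0 := by
  have hnhds : ({z | P.IsRoot z} \ {w})ᶜ ∈ 𝓝 w :=
    ((finite_setOfPred_isRoot hP).sdiff).isClosed.compl_mem_nhds (by simp)
  filter_upwards [nhdsWithin_le_nhds hnhds, self_mem_nhdsWithin] with z hz hzw
  exact fun hroot => hz ⟨hroot, hzw⟩

theorem Polynomial.tendstoUniformlyOn_inv_pow_mul_eval_inv (P : ℂ[X]) {w : ℂ} {r : ℝ}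
    (hr : r < ‖w‖ - 1) :
    TendstoUniformlyOn (fun k z => z⁻¹ ^ k * P.eval z⁻¹) 0 atTop (closedBall w r) := by
  replace hr : 1 < ‖w‖ - r := by linarith
  have hnorm : ∀ z ∈ closedBall w r, ‖w‖ - r ≤ ‖z‖ := fun z hz => by
    have := norm_sub_norm_le w z
    rw [norm_sub_rev] at this
    linarith [mem_closedBall_iff_norm.mp hz]
  have hinv : ∀ z ∈ closedBall w r, ‖z⁻¹‖ ≤ (‖w‖ - r)⁻¹ := fun z hz => by
    rw [norm_inv]; exact inv_anti₀ (by linarith) (hnorm z hz)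
  have hcont : ContinuousOn (fun z => P.eval z⁻¹) (closedBall w r) :=
    P.continuous.comp_continuousOn <| continuousOn_inv₀.mono fun z hz =>
      norm_pos_iff.mp ((zero_lt_one.trans hr).trans_le (hnorm z hz))
  obtain ⟨M, hM⟩ := (isCompact_closedBall w r).exists_bound_of_continuousOn hcont
  exact tendstoUniformlyOn_pow_mul_zero (by positivity) (inv_lt_one_of_one_lt₀ hr) hinv hM

theorem Polynomial.eventually_exists_mem_ball_eval_add_inv_pow_mul_eval_inv_eq_zero (P : ℂ[X])
    {w : ℂ} (hw : 1 < ‖w‖) (hPw : P.eval w = 0) {ε : ℝ} (hε : 0 < ε) :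
    ∀ᶠ k in atTop, ∃ z ∈ ball w ε, P.eval z + z⁻¹ ^ k * P.eval z⁻¹ = 0 := by
  rcases eq_or_ne P 0 with rfl | hP
  · exact Eventually.of_forall fun _ => ⟨w, mem_ball_self hε, by simp⟩
  obtain ⟨δ, hδ, hroots⟩ := Metric.eventually_nhds_iff.mp
    (eventually_nhdsWithin_iff.mp (P.eventually_nhdsNE_eval_ne_zero hP w))
  obtain ⟨r, hr, hrt⟩ := exists_between (lt_min (lt_min hε hδ) (sub_pos.mpr hw))
  simp only [lt_min_iff] at hrt
  obtain ⟨⟨hrε, hrδ⟩, hrw⟩ := hrt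
  have hz0 : ∀ z ∈ closedBall w r, z ≠ 0 := fun z hz h0 => by
    rw [h0, mem_closedBall, dist_zero_left] at hz; linarith
  have hsphere : ∀ z ∈ sphere w r, P.eval z ≠ 0 := fun z hz =>
    hroots ((mem_sphere.mp hz).trans_lt hrδ) (ne_of_mem_sphere hz hr.ne')
  have hdiff : ∀ k : ℕ, DifferentiableOn ℂ (fun z => P.eval z + z⁻¹ ^ k * P.eval z⁻¹)
      (closedBall w r) := fun k z hz =>
    have hinv := differentiableAt_inv (𝕜 := ℂ) (hz0 z hz)
    (P.differentiable.differentiableAt.add ((hinv.pow k).mul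
      (P.differentiable.differentiableAt.comp z hinv))).differentiableWithinAt
  filter_upwards [Complex.eventually_exists_mem_ball_add_eq_zero_of_tendstoUniformlyOn hr
    P.continuous.continuousOn hPw hsphere (P.tendstoUniformlyOn_inv_pow_mul_eval_inv hrw)
    (Eventually.of_forall hdiff)] with k ⟨z, hz, hroot⟩
  exact ⟨z, ball_subset_ball hrε.le hz, hroot⟩

theorem aChebyshev_root_near_salem_point_general (m : ℕ) (a : ℕ → ℝ) (ω : ℝ) (hω : 1 < |ω|)
    (hroot : ∑ i ∈ range (m + 1), a i * ω ^ (m - i) = 0)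
    (ε : ℝ) (hε : 0 < ε) :
    ∃ n₀ : ℕ, ∀ n ≥ n₀, ∃ ξ : ℂ,
      (∑ i ∈ range (m + 1), (a i : ℂ) * (Chebyshev.T ℂ ((n : ℤ) - i)).eval ξ) = 0 ∧
        ‖ξ - (((ω + ω⁻¹) / 2 : ℝ) : ℂ)‖ < ε := by
  set P := charPoly m fun i => (a i : ℂ)
  have hω' : 1 < ‖(ω : ℂ)‖ := by rwa [Complex.norm_real, Real.norm_eq_abs]
  have hPω : P.eval (ω : ℂ) = 0 := by simpa [P] using congr_arg ((↑) : ℝ → ℂ) hroot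
  obtain ⟨k₀, hk₀⟩ := eventually_atTop.mp
    (P.eventually_exists_mem_ball_eval_add_inv_pow_mul_eval_inv_eq_zero hω' hPω
      (lt_min hε (sub_pos.mpr hω')))
  refine ⟨m + k₀, fun n hn => ?_⟩
  obtain ⟨z, hz, hPz⟩ := hk₀ (2 * (n - m)) (by omega)
  obtain ⟨hzε, hzω⟩ := lt_min_iff.mp (mem_ball_iff_norm.mp hz)
  have hz1 : 1 ≤ ‖z‖ := by linarith [norm_sub_norm_le (ω : ℂ) z, norm_sub_rev z (ω : ℂ)]
  have hz0 : z ≠ 0 := norm_pos_iff.mp (zero_lt_one.trans_le hz1)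
  refine ⟨(z + z⁻¹) / 2, ?_, ?_⟩
  · have hsum := two_mul_sum_T_eval_eq (mul_inv_cancel₀ hz0)
      (by ring : 2 * ((z + z⁻¹) / 2) = _) (fun i => (a i : ℂ)) (by omega : m ≤ n)
    have hone : z ^ (n - m) * z⁻¹ ^ (n - m) = 1 := by
      rw [← mul_pow, mul_inv_cancel₀ hz0, one_pow]
    have hsum0 :
        2 * ∑ i ∈ range (m + 1), (a i : ℂ) * (T ℂ ((n : ℤ) - i)).eval ((z + z⁻¹) / 2) = 0 := by
      linear_combination hsum + z ^ (n - m) * hPz - z⁻¹ ^ (n - m) * P.eval z⁻¹ * hone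
    simpa using hsum0
  · calc ‖(z + z⁻¹) / 2 - (((ω + ω⁻¹) / 2 : ℝ) : ℂ)‖
          = ‖(z + z⁻¹) / 2 - (ω + (ω : ℂ)⁻¹) / 2‖ := by push_cast; rfl
      _ ≤ ‖z - ω‖ := norm_half_add_inv_sub_le hz1 hω'.le
      _ < ε := hzε

theorem aChebyshev_root_near_salem_point (m : ℕ) (a : ℕ → ℝ) (ω : ℝ) (hω : 1 < |ω|)
    (hroot : ∑ i ∈ range (m + 1), a i * ω ^ (m - i) = 0)
    (hinv : ∑ i ∈ range (m + 1), a i * ω⁻¹ ^ (m - i) ≠ 0)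
    (ε : ℝ) (hε : 0 < ε) :
    ∃ n₀ : ℕ, ∀ n ≥ n₀, ∃ ξ : ℂ,
      (∑ i ∈ range (m + 1), (a i : ℂ) * (Chebyshev.T ℂ ((n : ℤ) - i)).eval ξ) = 0 ∧
        ‖ξ - (((ω + ω⁻¹) / 2 : ℝ) : ℂ)‖ < ε :=
  aChebyshev_root_near_salem_point_general m a ω hω hroot ε hε
end
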